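/- Under the same maximal-volume assumption, the cross approximation satisfies the improved bound ‖A − A_r‖_C ≤ (r+1)·σ_{r+1}(A) / √(1 + Σ_{k=1}^{r} σ_{r+1}(A)²/σ_k(A)²). -/

import Mathlib

/-!
For an entry `(i, j)` outside the cross, let `B = A[I ∪ {i}, J ∪ {j}]`. The Schur complement
formula gives `det B = det A[I, J] · (A - A_r)ᵢⱼ`. Each entry of `B⁻¹` is an `r × r` minor of `A`
divided by `det B`, so maximality of the volume bounds it by `1 / |(A - A_r)ᵢⱼ|`, and therefore
`‖B⁻¹‖_F² ≤ (r + 1)² / (A - A_r)ᵢⱼ²`. On the other hand `‖B⁻¹‖_F² = ∑ₖ σₖ(B)⁻²`, and by the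
Courant–Fischer min-max principle `σₖ(B) ≤ σₖ(A)`, so `‖B⁻¹‖_F² ≥ ∑_{k ≤ r+1} σₖ(A)⁻²`.
Comparing the two bounds and rearranging gives the estimate.
-/

open Matrix BigOperators Filter

theorem Matrix.isHermitian_transpose_mul_self {m n : Type*} [Fintype m]
    (A : Matrix m n ℝ) : (Aᵀ * A).IsHermitian := by
  simpa using Matrix.isHermitian_conjTranspose_mul_self A

noncomputable def sval {m n : ℕ} (A : Matrix (Fin m) (Fin n) ℝ) (k : Fin n) : ℝ :=
  Real.sqrt ((Matrix.isHermitian_transpose_mul_self A).eigenvalues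
    (Tuple.sort (Matrix.isHermitian_transpose_mul_self A).eigenvalues (Fin.rev k)))

noncomputable def chebNorm {m n : ℕ} (A : Matrix (Fin m) (Fin n) ℝ) : ℝ :=
  ⨆ i, ⨆ j, |A i j|

noncomputable def frobNorm {m n : ℕ} (A : Matrix (Fin m) (Fin n) ℝ) : ℝ :=
  Real.sqrt (∑ i, ∑ j, (A i j) ^ 2)

open scoped RealInnerProductSpace

namespace Matrix

lemma mul_one_submatrix_id {R l m n : Type*} [Fintype n] [DecidableEq n] [NonAssocSemiring R]
    (A : Matrix m n R) (g : l → n) : A * (1 : Matrix n n R).submatrix id g = A.submatrix id g := by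
  simpa using mul_submatrix_one (Equiv.refl n) g A

lemma transpose_one_submatrix_mul_self {R l n : Type*} [Fintype n] [DecidableEq n] [DecidableEq l]
    [NonAssocSemiring R] {g : l → n} (hg : Function.Injective g) :
    ((1 : Matrix n n R).submatrix id g)ᵀ * (1 : Matrix n n R).submatrix id g = 1 := by
  rw [mul_one_submatrix_id, transpose_submatrix, transpose_one, submatrix_submatrix,
    Function.id_comp, Function.comp_id, submatrix_one g hg]

lemma dotProduct_mulVec_transpose_mul_self {R m n : Type*} [Fintype m] [Fintype n]
    [CommSemiring R] (C : Matrix m n R) (x : n → R) :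
    x ⬝ᵥ ((Cᵀ * C) *ᵥ x) = (C *ᵥ x) ⬝ᵥ (C *ᵥ x) := by
  rw [← mulVec_mulVec, dotProduct_mulVec, vecMul_transpose]

lemma dotProduct_comp_self_le {R l n : Type*} [Fintype l] [Fintype n] [Ring R] [LinearOrder R]
    [IsStrictOrderedRing R] (v : n → R) {f : l → n} (hf : Function.Injective f) :
    (v ∘ f) ⬝ᵥ (v ∘ f) ≤ v ⬝ᵥ v := by
  classical
  simp only [dotProduct, Function.comp_apply]
  rw [← Finset.sum_image (f := fun j => v j * v j) fun a _ b _ hab => hf hab]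
  exact Finset.sum_le_sum_of_subset_of_nonneg (Finset.subset_univ _)
    fun j _ _ => mul_self_nonneg (v j)

lemma trace_inv_transpose_mul_self {R q : Type*} [Fintype q] [DecidableEq q] [CommRing R]
    (B : Matrix q q R) : trace (Bᵀ * B)⁻¹ = ∑ k, ∑ l, B⁻¹ k l ^ 2 := by
  rw [Matrix.mul_inv_rev, ← transpose_nonsing_inv]
  simp only [trace, diag_apply, mul_apply, transpose_apply, sq]

lemma injective_of_det_submatrix_ne_zero {R m n q : Type*} [Fintype q] [DecidableEq q]
    [CommRing R] {A : Matrix m n R} {f : q → m} {g : q → n} (h : (A.submatrix f g).det ≠ 0) :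
    Function.Injective f ∧ Function.Injective g := by
  refine ⟨fun a b hab => ?_, fun a b hab => ?_⟩ <;> by_contra hne <;> apply h
  · exact det_zero_of_row_eq hne (by ext; simp [hab])
  · exact det_zero_of_column_eq hne (by simp [hab])

lemma abs_inv_apply_le_of_abs_det_le {q : ℕ} (B : Matrix (Fin (q + 1)) (Fin (q + 1)) ℝ) {d : ℝ}
    (hd : ∀ k l : Fin (q + 1), |(B.submatrix k.succAbove l.succAbove).det| ≤ d)
    (k l : Fin (q + 1)) : |B⁻¹ k l| ≤ d / |B.det| := by
  rw [inv_def, Matrix.smul_apply, Ring.inverse_eq_inv, smul_eq_mul,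
    adjugate_fin_succ_eq_det_submatrix, abs_mul, abs_mul, abs_pow, abs_neg, abs_one, one_pow,
    one_mul, abs_inv, inv_mul_eq_div]
  gcongr
  exact hd l k

lemma det_submatrix_snoc_snoc {R : Type*} [CommRing R] {m n r : ℕ} (A : Matrix (Fin m) (Fin n) R)
    {I : Fin r → Fin m} {J : Fin r → Fin n} (hIJ : IsUnit (A.submatrix I J)) (i : Fin m)
    (j : Fin n) :
    (A.submatrix (Fin.snoc I i) (Fin.snoc J j)).det =
      (A.submatrix I J).det *
        (A - A.submatrix id J * (A.submatrix I J)⁻¹ * A.submatrix I id) i j := by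
  let := (A.submatrix I J).invertibleOfIsUnitDet ((isUnit_iff_isUnit_det _).mp hIJ)
  have hblocks :
      (A.submatrix (Fin.snoc I i) (Fin.snoc J j)).submatrix finSumFinEquiv finSumFinEquiv =
        fromBlocks (A.submatrix I J) (of fun t (_ : Fin 1) => A (I t) j)
          (of fun (_ : Fin 1) s => A i (J s)) (of fun _ _ => A i j) := by
    have hcast : ∀ x : Fin r, Fin.castAdd 1 x = x.castSucc := fun _ => rfl
    have hlast : ∀ y : Fin 1, Fin.natAdd r y = Fin.last r := fun y => by
      rw [Subsingleton.elim y 0]; rfl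
    ext (x | x) (y | y) <;> simp [hcast, hlast]
  rw [← det_submatrix_equiv_self finSumFinEquiv, hblocks, det_fromBlocks₁₁, invOf_eq_nonsing_inv,
    det_fin_one]
  simp [mul_apply, Matrix.mul_assoc]

end Matrix

namespace Matrix.IsHermitian

variable {p : ℕ} {M : Matrix (Fin p) (Fin p) ℝ} (hM : M.IsHermitian)

noncomputable def eigenvaluesDesc (k : Fin p) : ℝ :=
  hM.eigenvalues (Tuple.sort hM.eigenvalues k.rev)

lemma sum_eigenvaluesDesc (F : ℝ → ℝ) :
    ∑ k, F (hM.eigenvaluesDesc k) = ∑ i, F (hM.eigenvalues i) :=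
  (Equiv.sum_comp Fin.revPerm fun k => F (hM.eigenvalues (Tuple.sort hM.eigenvalues k))).trans
    (Equiv.sum_comp (Tuple.sort hM.eigenvalues) fun i => F (hM.eigenvalues i))

lemma eigenvalues_ne_zero_of_det_ne_zero (h : M.det ≠ 0) (i : Fin p) :
    hM.eigenvalues i ≠ 0 := by
  rw [hM.det_eq_prod_eigenvalues] at h
  exact_mod_cast (Finset.prod_ne_zero_iff.mp h) i (Finset.mem_univ i)

lemma trace_inv_eq_sum_inv_eigenvalues (h : M.det ≠ 0) :
    trace M⁻¹ = ∑ i, (hM.eigenvalues i)⁻¹ := by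
  set U : Matrix (Fin p) (Fin p) ℝ := (hM.eigenvectorUnitary : Matrix (Fin p) (Fin p) ℝ)
  have hU : star U * U = 1 ∧ U * star U = 1 := hM.eigenvectorUnitary.2
  have hspec : M = U * diagonal hM.eigenvalues * star U := by
    simpa [Unitary.conjStarAlgAut_apply] using hM.spectral_theorem
  have hD : (diagonal hM.eigenvalues)⁻¹ = diagonal fun i => (hM.eigenvalues i)⁻¹ :=
    inv_eq_left_inv <| by
      rw [diagonal_mul_diagonal, ← diagonal_one]
      exact congrArg diagonal <|
        funext fun i => inv_mul_cancel₀ (hM.eigenvalues_ne_zero_of_det_ne_zero h i)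
  rw [← trace_diagonal, ← hD]
  nth_rw 1 [hspec]
  rw [Matrix.mul_inv_rev, Matrix.mul_inv_rev, inv_eq_left_inv hU.2, inv_eq_left_inv hU.1,
    ← Matrix.mul_assoc, trace_mul_cycle, hU.1, Matrix.one_mul]

lemma eigenvectorBasis_repr_mulVec (x : EuclideanSpace ℝ (Fin p)) (i : Fin p) :
    hM.eigenvectorBasis.repr (WithLp.toLp 2 (M *ᵥ x)) i =
      hM.eigenvalues i * hM.eigenvectorBasis.repr x i := by
  simp only [OrthonormalBasis.repr_apply_apply, EuclideanSpace.inner_eq_star_dotProduct,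
    star_trivial]
  rw [dotProduct_comm, dotProduct_mulVec, ← mulVec_transpose,
    ← conjTranspose_eq_transpose_of_trivial, hM.eq, mulVec_eigenvectorBasis, smul_dotProduct,
    smul_eq_mul, dotProduct_comm]

lemma dotProduct_eq_sum_eigenvectorBasis_repr (x y : EuclideanSpace ℝ (Fin p)) :
    x ⬝ᵥ y = ∑ i, hM.eigenvectorBasis.repr x i * hM.eigenvectorBasis.repr y i := by
  calc x ⬝ᵥ y = ⟪hM.eigenvectorBasis.repr x, hM.eigenvectorBasis.repr y⟫ := by
        rw [LinearIsometryEquiv.inner_map_map, EuclideanSpace.inner_eq_star_dotProduct,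
          star_trivial, dotProduct_comm]
    _ = _ := by simp only [PiLp.inner_apply, RCLike.inner_apply, conj_trivial, mul_comm]

lemma dotProduct_mulVec_sub_eq_sum (c : ℝ) (x : EuclideanSpace ℝ (Fin p)) :
    x ⬝ᵥ (M *ᵥ x) - c * (x ⬝ᵥ x) =
      ∑ i, (hM.eigenvalues i - c) * hM.eigenvectorBasis.repr x i ^ 2 := by
  rw [dotProduct_eq_sum_eigenvectorBasis_repr hM x (WithLp.toLp 2 (M *ᵥ x)),
    dotProduct_eq_sum_eigenvectorBasis_repr hM x x, Finset.mul_sum, ← Finset.sum_sub_distrib]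
  simp only [eigenvectorBasis_repr_mulVec]
  exact Finset.sum_congr rfl fun i _ => by ring

lemma eigenvectorBasis_repr_eq_zero_of_mem_span {S : Finset (Fin p)}
    {x : EuclideanSpace ℝ (Fin p)} (hx : x ∈ Submodule.span ℝ (hM.eigenvectorBasis '' S))
    {i : Fin p} (hi : i ∉ S) : hM.eigenvectorBasis.repr x i = 0 := by
  induction hx using Submodule.span_induction with
  | mem y hy =>
    obtain ⟨j, hj, rfl⟩ := hy
    rw [OrthonormalBasis.repr_self, PiLp.single_apply, if_neg]
    rintro rfl
    exact hi hj
  | zero => simp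
  | add y z _ _ hy hz => simp [hy, hz]
  | smul a y _ hy => simp [hy]

lemma finrank_span_image_eigenvectorBasis (S : Finset (Fin p)) :
    Module.finrank ℝ (Submodule.span ℝ (hM.eigenvectorBasis '' S)) = S.card := by
  rw [Set.image_eq_range, finrank_span_eq_card]
  · simp
  · exact hM.eigenvectorBasis.orthonormal.linearIndependent.comp _ Subtype.val_injective

lemma dotProduct_mulVec_sub_eq_sum_of_mem_span {S : Finset (Fin p)}
    {x : EuclideanSpace ℝ (Fin p)} (hx : x ∈ Submodule.span ℝ (hM.eigenvectorBasis '' S))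
    (c : ℝ) :
    x ⬝ᵥ (M *ᵥ x) - c * (x ⬝ᵥ x) =
      ∑ i ∈ S, (hM.eigenvalues i - c) * hM.eigenvectorBasis.repr x i ^ 2 := by
  rw [dotProduct_mulVec_sub_eq_sum, ← Finset.sum_subset (Finset.subset_univ S)]
  intro i _ hi
  rw [eigenvectorBasis_repr_eq_zero_of_mem_span hM hx hi]
  ring

theorem le_eigenvaluesDesc_of_forall_mem (k : Fin p) (c : ℝ)
    (W : Submodule ℝ (EuclideanSpace ℝ (Fin p))) (hW : k.1 + 1 ≤ Module.finrank ℝ W)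
    (hc : ∀ x ∈ W, c * (x ⬝ᵥ x) ≤ x ⬝ᵥ (M *ᵥ x)) :
    c ≤ hM.eigenvaluesDesc k := by
  classical
  set S := (Finset.Iic k.rev).image (Tuple.sort hM.eigenvalues)
  have hS : S.card = p - k := by
    rw [Finset.card_image_of_injective _ (Tuple.sort _).injective, Fin.card_Iic, Fin.val_rev]
    omega
  obtain ⟨x, hxW, hxS, hx0⟩ :
      ∃ x ∈ W, x ∈ Submodule.span ℝ (hM.eigenvectorBasis '' S) ∧ x ≠ 0 := by
    by_contra! h
    have := Submodule.finrank_add_finrank_le_of_disjoint (Submodule.disjoint_def.mpr h)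
    rw [finrank_span_image_eigenvectorBasis, hS, finrank_euclideanSpace_fin] at this
    omega
  have hxx : 0 < x ⬝ᵥ x := by
    simpa using dotProduct_self_star_pos_iff.mpr ((WithLp.ofLp_injective 2).ne hx0)
  have hle : x ⬝ᵥ (M *ᵥ x) - hM.eigenvaluesDesc k * (x ⬝ᵥ x) ≤ 0 := by
    rw [dotProduct_mulVec_sub_eq_sum_of_mem_span hM hxS]
    refine Finset.sum_nonpos fun i hi => mul_nonpos_of_nonpos_of_nonneg ?_ (sq_nonneg _)
    obtain ⟨j, hj, rfl⟩ := Finset.mem_image.mp hi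
    exact sub_nonpos.mpr (Tuple.monotone_sort hM.eigenvalues (Finset.mem_Iic.mp hj))
  nlinarith [hc x hxW]

theorem exists_finrank_eq_forall_eigenvaluesDesc_le (k : Fin p) :
    ∃ W : Submodule ℝ (EuclideanSpace ℝ (Fin p)), Module.finrank ℝ W = k.1 + 1 ∧
      ∀ x ∈ W, hM.eigenvaluesDesc k * (x ⬝ᵥ x) ≤ x ⬝ᵥ (M *ᵥ x) := by
  classical
  set S := (Finset.Ici k.rev).image (Tuple.sort hM.eigenvalues)
  refine ⟨Submodule.span ℝ (hM.eigenvectorBasis '' S), ?_, fun x hx => ?_⟩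
  · rw [finrank_span_image_eigenvectorBasis,
      Finset.card_image_of_injective _ (Tuple.sort _).injective, Fin.card_Ici, Fin.val_rev]
    omega
  · rw [← sub_nonneg, dotProduct_mulVec_sub_eq_sum_of_mem_span hM hx]
    refine Finset.sum_nonneg fun i hi => mul_nonneg ?_ (sq_nonneg _)
    obtain ⟨j, hj, rfl⟩ := Finset.mem_image.mp hi
    exact sub_nonneg.mpr (Tuple.monotone_sort hM.eigenvalues (Finset.mem_Ici.mp hj))

end Matrix.IsHermitian

section SingularValues

variable {m n : ℕ}

lemma sval_sq (A : Matrix (Fin m) (Fin n) ℝ) (k : Fin n) :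
    sval A k ^ 2 = (isHermitian_transpose_mul_self A).eigenvaluesDesc k :=
  Real.sq_sqrt ((posSemidef_conjTranspose_mul_self A).eigenvalues_nonneg _)

lemma sval_pos_of_det_ne_zero {A : Matrix (Fin n) (Fin n) ℝ} (h : A.det ≠ 0) (k : Fin n) :
    0 < sval A k := by
  have hdet : (Aᵀ * A).det ≠ 0 := by simpa [det_mul] using h
  refine Real.sqrt_pos.mpr <|
    lt_of_le_of_ne ((posSemidef_conjTranspose_mul_self A).eigenvalues_nonneg _) ?_
  exact ((isHermitian_transpose_mul_self A).eigenvalues_ne_zero_of_det_ne_zero hdet _).symm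

theorem sval_submatrix_le {q : ℕ} (A : Matrix (Fin m) (Fin n) ℝ) {f : Fin q → Fin m}
    {g : Fin q → Fin n} (hf : Function.Injective f) (hg : Function.Injective g) (k : Fin q)
    (hk : k.1 < n) : sval (A.submatrix f g) k ≤ sval A ⟨k, hk⟩ := by
  set B := A.submatrix f g
  -- `P` extends vectors by zero along `g`: it is an isometry with `A * P = A.submatrix id g`.
  set P : Matrix (Fin n) (Fin q) ℝ := (1 : Matrix (Fin n) (Fin n) ℝ).submatrix id g
  have hPP : Pᵀ * P = 1 := transpose_one_submatrix_mul_self hg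
  have hP : Function.Injective (toLpLin 2 2 P) :=
    Function.LeftInverse.injective (g := toLpLin 2 2 Pᵀ) fun x => by
      simp [toLpLin_apply, mulVec_mulVec, hPP]
  refine Real.sqrt_le_sqrt ?_
  obtain ⟨W, hW, hBW⟩ :=
    (isHermitian_transpose_mul_self B).exists_finrank_eq_forall_eigenvaluesDesc_le k
  refine (isHermitian_transpose_mul_self A).le_eigenvaluesDesc_of_forall_mem ⟨k, hk⟩ _
    (W.map (toLpLin 2 2 P)) ?_ ?_
  · rw [← hW, LinearEquiv.finrank_eq (Submodule.equivMapOfInjective _ hP W)]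
  · rintro _ ⟨x, hx, rfl⟩
    simp only [toLpLin_apply, WithLp.ofLp_toLp]
    calc _ * (P *ᵥ x ⬝ᵥ P *ᵥ x)
        = (isHermitian_transpose_mul_self B).eigenvaluesDesc k * (x ⬝ᵥ x) := by
          rw [← dotProduct_mulVec_transpose_mul_self, hPP, one_mulVec]; rfl
      _ ≤ x ⬝ᵥ ((Bᵀ * B) *ᵥ x) := hBW x hx
      _ = (A.submatrix id g *ᵥ x) ∘ f ⬝ᵥ (A.submatrix id g *ᵥ x) ∘ f :=
          dotProduct_mulVec_transpose_mul_self B x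
      _ ≤ A.submatrix id g *ᵥ x ⬝ᵥ A.submatrix id g *ᵥ x := dotProduct_comp_self_le _ hf
      _ = P *ᵥ x ⬝ᵥ (Aᵀ * A) *ᵥ P *ᵥ x := by
          rw [dotProduct_mulVec_transpose_mul_self, mulVec_mulVec, mul_one_submatrix_id]

theorem sum_sq_inv_apply_eq_sum_inv_sval_sq {B : Matrix (Fin n) (Fin n) ℝ} (h : B.det ≠ 0) :
    ∑ k, ∑ l, B⁻¹ k l ^ 2 = ∑ k, (sval B k ^ 2)⁻¹ := by
  have hBB : (Bᵀ * B).det ≠ 0 := by simpa [det_mul] using h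
  simp only [sval_sq, ← trace_inv_transpose_mul_self,
    (isHermitian_transpose_mul_self B).trace_inv_eq_sum_inv_eigenvalues hBB,
    (isHermitian_transpose_mul_self B).sum_eigenvaluesDesc]

end SingularValues

section MaxVolume

variable {m n q : ℕ} (A : Matrix (Fin m) (Fin n) ℝ) {f : Fin (q + 1) → Fin m}
  {g : Fin (q + 1) → Fin n}

lemma sval_pos_of_det_submatrix_ne_zero (hB : (A.submatrix f g).det ≠ 0) (k : Fin (q + 1))
    (hk : k.1 < n) : 0 < sval A ⟨k, hk⟩ :=
  (sval_pos_of_det_ne_zero hB k).trans_le <|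
    sval_submatrix_le A (injective_of_det_submatrix_ne_zero hB).1
      (injective_of_det_submatrix_ne_zero hB).2 k hk

theorem sum_inv_sval_sq_le_of_abs_det_le (hB : (A.submatrix f g).det ≠ 0) (hqn : q < n) {d : ℝ}
    (hd : ∀ (f' : Fin q → Fin m) (g' : Fin q → Fin n), Function.Injective f' →
      Function.Injective g' → |(A.submatrix f' g').det| ≤ d) :
    ∑ k : Fin (q + 1), (sval A ⟨k, by omega⟩ ^ 2)⁻¹ ≤
      (q + 1) ^ 2 * (d / |(A.submatrix f g).det|) ^ 2 := by
  obtain ⟨hf, hg⟩ := injective_of_det_submatrix_ne_zero hB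
  have hinv (k l) : |(A.submatrix f g)⁻¹ k l| ≤ d / |(A.submatrix f g).det| :=
    abs_inv_apply_le_of_abs_det_le _ (fun k l => hd _ _ (hf.comp Fin.succAbove_right_injective)
      (hg.comp Fin.succAbove_right_injective)) k l
  calc ∑ k : Fin (q + 1), (sval A ⟨k, by omega⟩ ^ 2)⁻¹
      ≤ ∑ k, (sval (A.submatrix f g) k ^ 2)⁻¹ := by
        refine Finset.sum_le_sum fun k _ =>
          inv_anti₀ (pow_pos (sval_pos_of_det_ne_zero hB k) 2) ?_
        exact pow_le_pow_left₀ (sval_pos_of_det_ne_zero hB k).le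
          (sval_submatrix_le A hf hg k _) 2
    _ = ∑ k, ∑ l, (A.submatrix f g)⁻¹ k l ^ 2 := (sum_sq_inv_apply_eq_sum_inv_sval_sq hB).symm
    _ ≤ ∑ _k : Fin (q + 1), ∑ _l : Fin (q + 1), (d / |(A.submatrix f g).det|) ^ 2 :=
        Finset.sum_le_sum fun k _ => Finset.sum_le_sum fun l _ =>
          sq_le_sq' (abs_le.mp (hinv k l)).1 (abs_le.mp (hinv k l)).2
    _ = (q + 1) ^ 2 * (d / |(A.submatrix f g).det|) ^ 2 := by simp; ring

end MaxVolume

lemma abs_le_mul_div_sqrt_of_sq_mul_sum_inv_sq_le {r : ℕ} {s : Fin (r + 1) → ℝ}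
    (hs : ∀ k, 0 < s k) {e c : ℝ} (hc : 0 ≤ c) (h : e ^ 2 * ∑ k, (s k ^ 2)⁻¹ ≤ c ^ 2) :
    |e| ≤ c * s (Fin.last r) / √(1 + ∑ k : Fin r, s (Fin.last r) ^ 2 / s k.castSucc ^ 2) := by
  have hσ := hs (Fin.last r)
  have hsum : 1 + ∑ k : Fin r, s (Fin.last r) ^ 2 / s k.castSucc ^ 2 =
      s (Fin.last r) ^ 2 * ∑ k, (s k ^ 2)⁻¹ := by
    simp only [Fin.sum_univ_castSucc, mul_add, Finset.mul_sum, div_eq_mul_inv]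
    rw [mul_inv_cancel₀ (by positivity), add_comm]
  set T := ∑ k, (s k ^ 2)⁻¹
  have hT : 0 < T := Finset.sum_pos (fun k _ => by have := hs k; positivity) Finset.univ_nonempty
  have heT : |e| * √T ≤ c := by
    rw [← Real.sqrt_sq_eq_abs, ← Real.sqrt_mul (sq_nonneg e), ← Real.sqrt_sq hc]
    exact Real.sqrt_le_sqrt h
  rw [hsum, Real.sqrt_mul (sq_nonneg _), Real.sqrt_sq hσ.le, le_div_iff₀ (by positivity)]
  nlinarith

theorem stmt10_general {m n r : ℕ} (hrn : r < n)
    (A : Matrix (Fin m) (Fin n) ℝ) (I : Fin r → Fin m) (J : Fin r → Fin n)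
    (hinv : IsUnit (A.submatrix I J))
    (hmax : ∀ (I' : Fin r → Fin m) (J' : Fin r → Fin n),
      Function.Injective I' → Function.Injective J' →
        |(A.submatrix I' J').det| ≤ |(A.submatrix I J).det|) :
    chebNorm (A - A.submatrix id J * (A.submatrix I J)⁻¹ * A.submatrix I id)
      ≤ (r + 1) * sval A ⟨r, hrn⟩ / Real.sqrt (1 + ∑ k : Fin r, sval A ⟨r, hrn⟩ ^ 2 / sval A ⟨k.1, lt_trans k.2 hrn⟩ ^ 2) := by
  set E := A - A.submatrix id J * (A.submatrix I J)⁻¹ * A.submatrix I id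
  set bound := (r + 1) * sval A ⟨r, hrn⟩ /
    √(1 + ∑ k : Fin r, sval A ⟨r, hrn⟩ ^ 2 / sval A ⟨k.1, lt_trans k.2 hrn⟩ ^ 2)
  have hbound : 0 ≤ bound := by unfold bound sval; positivity
  have hentry (i j) : |E i j| ≤ bound := by
    have hschur : (A.submatrix (Fin.snoc I i) (Fin.snoc J j)).det =
        (A.submatrix I J).det * E i j := det_submatrix_snoc_snoc A hinv i j
    have hIJ : (A.submatrix I J).det ≠ 0 := ((isUnit_iff_isUnit_det _).mp hinv).ne_zero
    -- This case contains `i ∈ Set.range I` and `j ∈ Set.range J` (a repeated row or column).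
    by_cases hB : (A.submatrix (Fin.snoc I i) (Fin.snoc J j)).det = 0
    · rw [hB, zero_eq_mul, or_iff_right hIJ] at hschur
      rwa [hschur, abs_zero]
    have hE : E i j ≠ 0 := by rintro h; rw [h, mul_zero] at hschur; exact hB hschur
    refine abs_le_mul_div_sqrt_of_sq_mul_sum_inv_sq_le (s := fun k => sval A ⟨k, by omega⟩)
      (fun k => sval_pos_of_det_submatrix_ne_zero A hB k _) (by positivity) ?_
    calc E i j ^ 2 * ∑ k : Fin (r + 1), (sval A ⟨k, by omega⟩ ^ 2)⁻¹
        ≤ E i j ^ 2 * ((r + 1) ^ 2 * (|(A.submatrix I J).det| /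
            |(A.submatrix (Fin.snoc I i) (Fin.snoc J j)).det|) ^ 2) := by
          gcongr
          exact sum_inv_sval_sq_le_of_abs_det_le A hB hrn hmax
      _ = ((r : ℝ) + 1) ^ 2 := by
          rw [hschur, abs_mul, div_mul_cancel_left₀ (abs_ne_zero.mpr hIJ), inv_pow, sq_abs]
          field_simp
  exact Real.iSup_le (fun i => Real.iSup_le (hentry i) hbound) hbound

theorem stmt10 {m n r : ℕ} (hrm : r < m) (hrn : r < n)
    (A : Matrix (Fin m) (Fin n) ℝ) (I : Fin r → Fin m) (J : Fin r → Fin n)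
    (hI : Function.Injective I) (hJ : Function.Injective J)
    (hinv : IsUnit (A.submatrix I J))
    (hmax : ∀ (I' : Fin r → Fin m) (J' : Fin r → Fin n),
      Function.Injective I' → Function.Injective J' →
        |(A.submatrix I' J').det| ≤ |(A.submatrix I J).det|) :
    chebNorm (A - A.submatrix id J * (A.submatrix I J)⁻¹ * A.submatrix I id)
      ≤ (r + 1) * sval A ⟨r, hrn⟩ / Real.sqrt (1 + ∑ k : Fin r, sval A ⟨r, hrn⟩ ^ 2 / sval A ⟨k.1, lt_trans k.2 hrn⟩ ^ 2) :=
  stmt10_general hrn A I J hinv hmax
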